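/- arXiv:1412.5162 — 3 statements merged into one kernel-verified Lean document; each statement's English description precedes it below -/
import Mathlib

section
/- If χ is a real non-principal Dirichlet character modulo N, then L(1, χ) ≠ 0. -/
theorem lfunction_apply_one_ne_zero_of_real_general {N : ℕ} [NeZero N]
    (χ : DirichletCharacter ℂ N)
    (hχ : χ ≠ 1) :
    DirichletCharacter.LFunction χ 1 ≠ 0 :=
  DirichletCharacter.LFunction_apply_one_ne_zero hχ

/-- If `χ` is a real non-principal Dirichlet character modulo `N`
(real meaning all its values are real numbers), then `L(1, χ) ≠ 0`. -/
theorem lfunction_apply_one_ne_zero_of_real {N : ℕ} [NeZero N]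
    (χ : DirichletCharacter ℂ N) (hreal : ∀ a : ZMod N, (χ a).im = 0)
    (hχ : χ ≠ 1) :
    DirichletCharacter.LFunction χ 1 ≠ 0 :=
  lfunction_apply_one_ne_zero_of_real_general χ hχ
end

section
/- Let χ be a real Dirichlet character modulo N, and for each positive integer n set c_n = ∑_{d ∣ n} χ(d) (the Dirichlet convolution of the constant function 1 with χ). Then c_n ≥ 0 for every n ≥ 1. -/
open scoped ComplexOrder

lemma MulChar.sq_eq_one_of_forall_im_eq_zero {R : Type*} [CommRing R] [Finite Rˣ]
    {χ : MulChar R ℂ} (h : ∀ a, (χ a).im = 0) : χ ^ 2 = 1 := by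
  have hstar : star χ = χ := MulChar.ext fun a ↦ Complex.conj_eq_iff_im.mpr (h a)
  rw [sq, ← inv_mul_cancel χ, ← star_eq_inv, hstar]

lemma DirichletCharacter.zetaMul_apply {N : ℕ} (χ : DirichletCharacter ℂ N) (n : ℕ) :
    χ.zetaMul n = ∑ d ∈ n.divisors, χ d := by
  rw [zetaMul, ArithmeticFunction.coe_zeta_mul_apply]
  refine Finset.sum_congr rfl fun d hd ↦ ?_
  simp [toArithmeticFunction, (Nat.pos_of_mem_divisors hd).ne']

theorem zeta_mul_char_coeff_nonneg_general {N : ℕ}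
    (χ : DirichletCharacter ℂ N) (hreal : ∀ x : ZMod N, (χ x).im = 0)
    (c : ℕ → ℂ) (hc : ∀ n, c n = ∑ d ∈ n.divisors, χ (d : ZMod N))
    (n : ℕ) :
    0 ≤ c n := by
  rw [hc, ← χ.zetaMul_apply]
  exact χ.zetaMul_nonneg (MulChar.sq_eq_one_of_forall_im_eq_zero hreal) n

/-- For a real Dirichlet character `χ` mod `N`, the coefficients
`c n = ∑_{d ∣ n} χ(d)` satisfy `c n ≥ 0` for every `n ≥ 1`. -/
theorem zeta_mul_char_coeff_nonneg {N : ℕ} [NeZero N]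
    (χ : DirichletCharacter ℂ N) (hreal : ∀ x : ZMod N, (χ x).im = 0)
    (c : ℕ → ℂ) (hc : ∀ n, c n = ∑ d ∈ n.divisors, χ (d : ZMod N))
    (n : ℕ) (hn : 1 ≤ n) :
    0 ≤ c n :=
  zeta_mul_char_coeff_nonneg_general χ hreal c hc n
end

section
/- Let χ be a real Dirichlet character modulo N, and for each positive integer n set c_n = ∑_{d ∣ n} χ(d). Then for every real X ≥ 1, the partial sum ∑_{1 ≤ n ≤ X} c_n · n^{-1/2} is at least ∑_{1 ≤ m ≤ √X} 1/m. -/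
/-!
For a real character `χ`, the divisor sum `c = ζ * χ` is multiplicative and
`c (p ^ k) = 1 + χ p + ⋯ + χ p ^ k` with `χ p ∈ {0, 1, -1}`, so `c n ≥ 0` for every `n` and
`c (m ^ 2) ≥ 1`. Keeping only the squares `n = m ^ 2 ≤ X`, each contributing at least
`m⁻¹`, gives the bound.
-/

open scoped ComplexOrder

open Finset ArithmeticFunction

namespace DirichletCharacter

variable {N : ℕ} {χ : DirichletCharacter ℂ N}

lemma isQuadratic_of_im_eq_zero (hreal : ∀ x, (χ x).im = 0) : χ.IsQuadratic := by
  intro x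
  by_cases hx : IsUnit x
  · have hχx : χ x = ((χ x).re : ℂ) := Complex.ext rfl (by simp [hreal])
    have hnorm : |(χ x).re| = 1 := by
      rw [← Real.norm_eq_abs, ← Complex.norm_real, ← hχx, ← hx.unit_spec, χ.unit_norm_eq_one]
    rcases abs_eq one_pos.le |>.mp hnorm with h | h
    · exact .inr (.inl (by rw [hχx, h, Complex.ofReal_one]))
    · exact .inr (.inr (by rw [hχx, h, Complex.ofReal_neg, Complex.ofReal_one]))
  · exact .inl (χ.map_nonunit hx)

lemma zetaMul_apply_s4 (χ : DirichletCharacter ℂ N) (n : ℕ) :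
    χ.zetaMul n = ∑ d ∈ n.divisors, χ d := by
  rw [zetaMul, coe_zeta_mul_apply]
  refine sum_congr rfl fun d hd ↦ ?_
  simp [toArithmeticFunction, (Nat.pos_of_mem_divisors hd).ne']

lemma one_le_zetaMul_prime_pow_two_mul (hχ : χ ^ 2 = 1) {p : ℕ} (hp : p.Prime) (k : ℕ) :
    1 ≤ χ.zetaMul (p ^ (2 * k)) := by
  rw [zetaMul_apply_s4, Nat.sum_divisors_prime_pow hp]
  simp only [Nat.cast_pow, map_pow]
  rcases MulChar.isQuadratic_iff_sq_eq_one.mpr hχ p with h | h | h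
  · rw [sum_range_succ']
    simp [h]
  · simp only [h, one_pow, sum_const, card_range, nsmul_eq_mul, mul_one]
    exact_mod_cast Nat.le_add_left 1 _
  · rw [h, neg_one_geom_sum, if_neg (by simp)]

lemma one_le_zetaMul_sq (hχ : χ ^ 2 = 1) {m : ℕ} (hm : m ≠ 0) : 1 ≤ χ.zetaMul (m ^ 2) := by
  rw [χ.isMultiplicative_zetaMul.multiplicative_factorization _ (pow_ne_zero 2 hm)]
  refine one_le_prod fun p hp ↦ ?_
  rw [Nat.factorization_pow, Finsupp.smul_apply, smul_eq_mul]
  exact one_le_zetaMul_prime_pow_two_mul hχ (Nat.prime_of_mem_primeFactors hp) _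

end DirichletCharacter

lemma natCast_cpow_neg_half_nonneg (n : ℕ) : 0 ≤ (n : ℂ) ^ (-(1 / 2 : ℂ)) := by
  have := Complex.ofReal_cpow (Nat.cast_nonneg n) (-(1 / 2))
  push_cast at this
  rw [← this]
  exact Complex.zero_le_real.mpr (by positivity)

lemma natCast_sq_cpow_neg_half (m : ℕ) : ((m ^ 2 : ℕ) : ℂ) ^ (-(1 / 2 : ℂ)) = 1 / m := by
  have := Complex.ofReal_cpow (Nat.cast_nonneg (m ^ 2)) (-(1 / 2))
  push_cast at this
  rw [Nat.cast_pow, ← this, ← Real.rpow_natCast, ← Real.rpow_mul (Nat.cast_nonneg m)]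
  norm_num [Real.rpow_neg_one]

lemma image_sq_Icc_floor_sqrt_subset (X : ℝ) :
    (Icc 1 ⌊√X⌋₊).image (· ^ 2) ⊆ Icc 1 ⌊X⌋₊ := by
  intro n hn
  obtain ⟨m, hm, rfl⟩ := mem_image.mp hn
  obtain ⟨hm1, hmX⟩ := mem_Icc.mp hm
  have hm_le : (m : ℝ) ≤ √X := (Nat.le_floor_iff (Real.sqrt_nonneg X)).mp hmX
  have hm_sq : (m : ℝ) ^ 2 ≤ X := (Real.le_sqrt' (by positivity)).mp hm_le
  exact mem_Icc.mpr ⟨Nat.one_le_pow _ _ hm1, Nat.le_floor (by exact_mod_cast hm_sq)⟩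

lemma sum_one_div_le_sum_mul_cpow_neg_half {a : ℕ → ℂ} (ha : ∀ n, 0 ≤ a n)
    (ha_sq : ∀ m ≠ 0, 1 ≤ a (m ^ 2)) (X : ℝ) :
    ∑ m ∈ Icc 1 ⌊√X⌋₊, (1 : ℂ) / m ≤ ∑ n ∈ Icc 1 ⌊X⌋₊, a n * (n : ℂ) ^ (-(1 / 2 : ℂ)) := by
  have hinj : Set.InjOn (· ^ 2 : ℕ → ℕ) (Icc 1 ⌊√X⌋₊) :=
    (Nat.pow_left_injective two_ne_zero).injOn
  calc ∑ m ∈ Icc 1 ⌊√X⌋₊, (1 : ℂ) / m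
      ≤ ∑ m ∈ Icc 1 ⌊√X⌋₊, a (m ^ 2) * ((m ^ 2 : ℕ) : ℂ) ^ (-(1 / 2 : ℂ)) := by
        refine sum_le_sum fun m hm ↦ ?_
        rw [natCast_sq_cpow_neg_half]
        exact le_mul_of_one_le_left (by positivity) (ha_sq m (by simp at hm; omega))
    _ = ∑ n ∈ (Icc 1 ⌊√X⌋₊).image (· ^ 2), a n * (n : ℂ) ^ (-(1 / 2 : ℂ)) :=
        (sum_image (f := fun n ↦ a n * (n : ℂ) ^ (-(1 / 2 : ℂ))) hinj).symm
    _ ≤ ∑ n ∈ Icc 1 ⌊X⌋₊, a n * (n : ℂ) ^ (-(1 / 2 : ℂ)) :=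
        sum_le_sum_of_subset_of_nonneg (image_sq_Icc_floor_sqrt_subset X) fun n _ _ ↦
          mul_nonneg (ha n) (natCast_cpow_neg_half_nonneg n)

theorem partial_sum_ge_harmonic_general {N : ℕ}
    (χ : DirichletCharacter ℂ N) (hreal : ∀ x : ZMod N, (χ x).im = 0)
    (c : ℕ → ℂ) (hc : ∀ n, c n = ∑ d ∈ n.divisors, χ (d : ZMod N))
    (X : ℝ) :
    ∑ m ∈ Finset.Icc 1 ⌊Real.sqrt X⌋₊, (1 : ℂ) / m ≤
      ∑ n ∈ Finset.Icc 1 ⌊X⌋₊, c n * (n : ℂ) ^ (-(1 / 2 : ℂ)) := by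
  have hχ : χ ^ 2 = 1 :=
    MulChar.isQuadratic_iff_sq_eq_one.mp (DirichletCharacter.isQuadratic_of_im_eq_zero hreal)
  obtain rfl : c = χ.zetaMul := funext fun n ↦ (hc n).trans (χ.zetaMul_apply_s4 n).symm
  exact sum_one_div_le_sum_mul_cpow_neg_half (DirichletCharacter.zetaMul_nonneg hχ)
    (fun m hm ↦ DirichletCharacter.one_le_zetaMul_sq hχ hm) X

/-- For a real Dirichlet character `χ` mod `N` with coefficients
`c n = ∑_{d ∣ n} χ(d)`, and any real `X ≥ 1`, the partial sum
`∑_{1 ≤ n ≤ X} c n · n^{-1/2}` is at least `∑_{1 ≤ m ≤ √X} 1/m`. -/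
theorem partial_sum_ge_harmonic {N : ℕ} [NeZero N]
    (χ : DirichletCharacter ℂ N) (hreal : ∀ x : ZMod N, (χ x).im = 0)
    (c : ℕ → ℂ) (hc : ∀ n, c n = ∑ d ∈ n.divisors, χ (d : ZMod N))
    (X : ℝ) (hX : 1 ≤ X) :
    ∑ m ∈ Finset.Icc 1 ⌊Real.sqrt X⌋₊, (1 : ℂ) / m ≤
      ∑ n ∈ Finset.Icc 1 ⌊X⌋₊, c n * (n : ℂ) ^ (-(1 / 2 : ℂ)) :=
  partial_sum_ge_harmonic_general χ hreal c hc X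
end
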